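/- arXiv:1506.01814 — 3 statements merged into one kernel-verified Lean document; each statement's English description precedes it below -/
import Mathlib

section
/- Let K be a number field, let S be a finite set of finite places of K, let O = O_{K,S} be the ring of S-integers, and let ℓ be an odd prime. Then the group SL₂(O) contains an element of order exactly ℓ if and only if there exists a primitive ℓ-th root of unity ζ in an algebraic closure of K such that ζ + ζ⁻¹ lies in the image of K (i.e. ζ_ℓ + ζ_ℓ⁻¹ ∈ K). -/
/-!
Over a field of characteristic zero, `g ∈ SL₂` with `tr g = ζ + ζ⁻¹` has characteristic
polynomial `(X - ζ)(X - ζ⁻¹)`. If `ζ ≠ ζ⁻¹` this polynomial divides `X ^ n - 1` as soon as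
`ζ ^ n = 1`, so `g` has the order of `ζ`; conversely `g ^ n = 1` forces `ζ ^ n = 1`, and `ζ = 1`
would make `g` unipotent, hence trivial. Embedding `O_{K,S}` into an algebraic closure, an element
of order `ℓ` thus yields `ζ_ℓ + ζ_ℓ⁻¹ = tr g ∈ K`. Conversely `ζ_ℓ + ζ_ℓ⁻¹` is an algebraic integer,
so if it lies in `K` it lies in `O_{K,S}`, and the companion matrix of `X² - (ζ_ℓ + ζ_ℓ⁻¹)X + 1`
has order `ℓ`.
-/

open IsDedekindDomain NumberField Polynomial

theorem one_add_pow_of_mul_self_eq_zero {R : Type*} [Ring R] {N : R} (hN : N * N = 0) (n : ℕ) :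
    (1 + N) ^ n = 1 + n • N := by
  induction n with
  | zero => simp
  | succ n ih =>
    rw [pow_succ, ih, add_mul, one_mul, mul_add, mul_one, smul_mul_assoc, hN, smul_zero,
      add_zero, succ_nsmul]
    abel

section Algebra

variable {F A : Type*} [Field F] [Ring A] [Algebra F A]

theorem pow_eq_one_of_mem_spectrum [Nontrivial A] {a : A} {ζ : F} (hζ : ζ ∈ spectrum F a)
    {n : ℕ} (ha : a ^ n = 1) : ζ ^ n = 1 := by
  simpa [ha, spectrum.one_eq] using spectrum.pow_mem_pow a n hζ

theorem eq_one_of_sub_one_sq_eq_zero_of_pow_eq_one [CharZero F] {a : A} (ha : (a - 1) ^ 2 = 0)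
    {n : ℕ} (hn : n ≠ 0) (h : a ^ n = 1) : a = 1 := by
  have hpow := one_add_pow_of_mul_self_eq_zero (N := a - 1) (by rwa [← sq]) n
  rw [add_sub_cancel, h, left_eq_add, ← Nat.cast_smul_eq_nsmul F] at hpow
  exact sub_eq_zero.1 ((smul_eq_zero.1 hpow).resolve_left (Nat.cast_ne_zero.2 hn))

end Algebra

theorem X_sub_C_mul_X_sub_C_dvd_X_pow_sub_one {R : Type*} [CommRing R] {a b : R}
    (hab : IsUnit (a - b)) {n : ℕ} (ha : a ^ n = 1) (hb : b ^ n = 1) :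
    (X - C a) * (X - C b) ∣ (X ^ n - 1 : R[X]) :=
  (isCoprime_X_sub_C_of_isUnit_sub hab).mul_dvd
    (dvd_iff_isRoot.2 (by simp [ha])) (dvd_iff_isRoot.2 (by simp [hb]))

theorem Matrix.pow_eq_one_of_charpoly_dvd {R n : Type*} [CommRing R] [DecidableEq n] [Fintype n]
    {M : Matrix n n R} {k : ℕ} (h : M.charpoly ∣ X ^ k - 1) : M ^ k = 1 := by
  obtain ⟨q, hq⟩ := h
  simpa [sub_eq_zero, M.aeval_self_charpoly] using congrArg (aeval M) hq

theorem Nat.Prime.two_lt_of_odd {p : ℕ} (hp : p.Prime) (hodd : Odd p) : 2 < p := by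
  obtain ⟨k, rfl⟩ := hodd
  have := hp.two_le
  omega

theorem IsPrimitiveRoot.ne_inv {G : Type*} [CommGroupWithZero G] {ζ : G} {k : ℕ}
    (hζ : IsPrimitiveRoot ζ k) (hk : 2 < k) : ζ ≠ ζ⁻¹ := by
  intro h
  have hζ0 : ζ ≠ 0 := hζ.ne_zero (by omega)
  have hk2 : k ∣ 2 :=
    hζ.dvd_of_pow_eq_one 2 (by rw [sq]; nth_rw 2 [h]; exact mul_inv_cancel₀ hζ0)
  have := Nat.le_of_dvd two_pos hk2
  omega

theorem IsAlgClosed.exists_add_inv_eq {F : Type*} [Field F] [IsAlgClosed F] (t : F) :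
    ∃ ζ : F, ζ ≠ 0 ∧ ζ + ζ⁻¹ = t := by
  obtain ⟨ζ, hζ⟩ := IsAlgClosed.exists_root (X ^ 2 - C t * X + 1)
    (ne_of_eq_of_ne (by compute_degree!) two_ne_zero)
  have hquad : ζ * (t - ζ) = 1 := by
    simp only [IsRoot, eval_add, eval_sub, eval_mul, eval_pow, eval_X, eval_C, eval_one] at hζ
    linear_combination -hζ
  refine ⟨ζ, left_ne_zero_of_mul_eq_one hquad, ?_⟩
  rw [inv_eq_of_mul_eq_one_right hquad]
  ring

theorem Matrix.charpoly_eq_of_det_eq_one {F : Type*} [Field F] {M : Matrix (Fin 2) (Fin 2) F}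
    (hdet : M.det = 1) {ζ : F} (hζ : ζ ≠ 0) (htr : M.trace = ζ + ζ⁻¹) :
    M.charpoly = (X - C ζ) * (X - C ζ⁻¹) := by
  have hC : C ζ * C ζ⁻¹ = 1 := by rw [← C_mul, mul_inv_cancel₀ hζ, C_1]
  rw [charpoly_fin_two, hdet, htr, C_add, C_1]
  linear_combination -hC

namespace Matrix.SpecialLinearGroup

theorem map_injective {R S n : Type*} [CommRing R] [CommRing S] [Fintype n] [DecidableEq n]
    {f : R →+* S} (hf : Function.Injective f) : Function.Injective (map (n := n) f) :=
  fun _ _ h ↦ Subtype.ext (Matrix.map_injective hf (congrArg Subtype.val h))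

def companion {R : Type*} [CommRing R] (y : R) : SpecialLinearGroup (Fin 2) R :=
  ⟨!![0, -1; 1, y], by simp [det_fin_two_of]⟩

theorem trace_companion {R : Type*} [CommRing R] (y : R) :
    (companion y : Matrix (Fin 2) (Fin 2) R).trace = y := by
  simp [companion, trace_fin_two]

theorem orderOf_eq_prime_iff_isPrimitiveRoot {F : Type*} [Field F] [CharZero F]
    (g : SpecialLinearGroup (Fin 2) F) {ζ : F} (hζ : ζ ≠ 0)
    (htr : (g : Matrix (Fin 2) (Fin 2) F).trace = ζ + ζ⁻¹) {ℓ : ℕ} (hℓ : ℓ.Prime)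
    (hℓodd : Odd ℓ) : orderOf g = ℓ ↔ IsPrimitiveRoot ζ ℓ := by
  have := Fact.mk hℓ
  rw [← orderOf_injective coeMonoidHom coeMonoidHom_injective g, coeMonoidHom_apply,
    IsPrimitiveRoot.iff_orderOf]
  set M := (g : Matrix (Fin 2) (Fin 2) F)
  have hchar : M.charpoly = (X - C ζ) * (X - C ζ⁻¹) :=
    charpoly_eq_of_det_eq_one g.det_coe hζ htr
  have hspec : ζ ∈ spectrum F M := mem_spectrum_of_isRoot_charpoly (by rw [hchar]; simp)
  constructor
  · intro hM
    have hMℓ : M ^ ℓ = 1 := hM ▸ pow_orderOf_eq_one M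
    refine orderOf_eq_prime (pow_eq_one_of_mem_spectrum hspec hMℓ) ?_
    rintro rfl
    have hunip : (M - 1) ^ 2 = 0 := by simpa [hchar, sq] using M.aeval_self_charpoly
    rw [eq_one_of_sub_one_sq_eq_zero_of_pow_eq_one (F := F) hunip hℓ.ne_zero hMℓ,
      orderOf_one] at hM
    exact hℓ.ne_one hM.symm
  · intro hζℓ
    have hζpow : ζ ^ ℓ = 1 := hζℓ ▸ pow_orderOf_eq_one ζ
    have hne : ζ - ζ⁻¹ ≠ 0 := sub_ne_zero.2 <|
      (IsPrimitiveRoot.iff_orderOf.2 hζℓ).ne_inv (hℓ.two_lt_of_odd hℓodd)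
    refine orderOf_eq_prime (pow_eq_one_of_charpoly_dvd (hchar ▸
      X_sub_C_mul_X_sub_C_dvd_X_pow_sub_one hne.isUnit hζpow (by rw [inv_pow, hζpow, inv_one])))
      fun hM ↦ ?_
    rw [hM, spectrum.one_eq, Set.mem_singleton_iff] at hspec
    rw [hspec, orderOf_one] at hζℓ
    exact hℓ.ne_one hζℓ.symm

theorem orderOf_eq_prime_iff_isPrimitiveRoot_of_injective {R F : Type*} [CommRing R] [Field F]
    [CharZero F] {φ : R →+* F} (hφ : Function.Injective φ) (g : SpecialLinearGroup (Fin 2) R)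
    {ζ : F} (hζ : ζ ≠ 0) (htr : φ (g : Matrix (Fin 2) (Fin 2) R).trace = ζ + ζ⁻¹) {ℓ : ℕ}
    (hℓ : ℓ.Prime) (hℓodd : Odd ℓ) : orderOf g = ℓ ↔ IsPrimitiveRoot ζ ℓ := by
  rw [← orderOf_injective _ (map_injective hφ) g]
  exact orderOf_eq_prime_iff_isPrimitiveRoot _ hζ (by rw [← htr, AddMonoidHom.map_trace]; rfl)
    hℓ hℓodd

end Matrix.SpecialLinearGroup

theorem Set.mem_integer_of_isIntegral {K : Type*} [Field K] [NumberField K]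
    (S : Set (HeightOneSpectrum (𝓞 K))) {x : K} (hx : IsIntegral ℤ x) : x ∈ S.integer K := by
  obtain ⟨z, rfl⟩ := IsIntegralClosure.isIntegral_iff (A := 𝓞 K).1 hx
  exact Subalgebra.algebraMap_mem _ z

theorem sl2_has_order_ell_iff_general (K : Type*) [Field K] [NumberField K]
    (S : Set (HeightOneSpectrum (𝓞 K)))
    (ℓ : ℕ) (hℓ : ℓ.Prime) (hℓodd : Odd ℓ) :
    (∃ g : Matrix.SpecialLinearGroup (Fin 2) (S.integer K), orderOf g = ℓ) ↔
      (∃ ζ : AlgebraicClosure K, IsPrimitiveRoot ζ ℓ ∧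
        ∃ x : K, algebraMap K (AlgebraicClosure K) x = ζ + ζ⁻¹) := by
  let φ : S.integer K →+* AlgebraicClosure K := (algebraMap K _).comp (S.integer K).val
  have hφ : Function.Injective φ := (algebraMap K _).injective.comp Subtype.val_injective
  constructor
  · rintro ⟨g, hg⟩
    obtain ⟨ζ, hζ0, hζ⟩ := IsAlgClosed.exists_add_inv_eq
      (φ (g : Matrix (Fin 2) (Fin 2) (S.integer K)).trace)
    refine ⟨ζ, ?_, _, hζ.symm⟩
    rwa [← Matrix.SpecialLinearGroup.orderOf_eq_prime_iff_isPrimitiveRoot_of_injective hφ g hζ0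
      hζ.symm hℓ hℓodd]
  · rintro ⟨ζ, hζ, x, hx⟩
    have hxint : IsIntegral ℤ x := (isIntegral_algebraMap_iff (algebraMap K _).injective).1
      (hx ▸ (hζ.isIntegral hℓ.pos).add (hζ.inv.isIntegral hℓ.pos))
    refine ⟨.companion ⟨x, S.mem_integer_of_isIntegral hxint⟩, ?_⟩
    rwa [Matrix.SpecialLinearGroup.orderOf_eq_prime_iff_isPrimitiveRoot_of_injective hφ _
      (hζ.ne_zero hℓ.ne_zero) (by rw [Matrix.SpecialLinearGroup.trace_companion, ← hx]; rfl)
      hℓ hℓodd]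

/-- For a number field `K`, a finite set `S` of finite places of `K`,
`O = O_{K,S}` the ring of `S`-integers, and an odd prime `ℓ`, the group `SL₂(O)` contains an
element of order exactly `ℓ` if and only if `ζ_ℓ + ζ_ℓ⁻¹ ∈ K`, i.e. there is a primitive
`ℓ`-th root of unity `ζ` in an algebraic closure of `K` with `ζ + ζ⁻¹` in the image of `K`. -/
theorem sl2_has_order_ell_iff (K : Type*) [Field K] [NumberField K]
    (S : Set (HeightOneSpectrum (𝓞 K))) (hS : S.Finite)
    (ℓ : ℕ) (hℓ : ℓ.Prime) (hℓodd : Odd ℓ) :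
    (∃ g : Matrix.SpecialLinearGroup (Fin 2) (S.integer K), orderOf g = ℓ) ↔
      (∃ ζ : AlgebraicClosure K, IsPrimitiveRoot ζ ℓ ∧
        ∃ x : K, algebraMap K (AlgebraicClosure K) x = ζ + ζ⁻¹) :=
  sl2_has_order_ell_iff_general K S ℓ hℓ hℓodd
end

section
/- Let D be an integral domain of characteristic 0, ℓ an odd prime, g ∈ SL₂(D) an element of order exactly ℓ, and x ∈ GL₂(D) such that x·g·x⁻¹ = g^k for some natural number k. Then k ≡ 1 (mod ℓ) or k ≡ −1 (mod ℓ). -/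
/-!
Pass to an algebraic closure `K` of the fraction field of `D`. An eigenvalue `z` of `g` is an
`ℓ`-th root of unity, and `z ≠ 1`: otherwise `tr g = 2`, so `(g - 1)² = 0` by Cayley–Hamilton and
`1 = g ^ ℓ = 1 + ℓ (g - 1)` forces `g = 1` in characteristic `0`. Hence `z` has order `ℓ`.
Conjugate matrices have equal traces, so `g ^ k` has the same characteristic polynomial
`X² - (tr g) X + 1` as `g`; its eigenvalue `z ^ k` is therefore `z` or `z⁻¹`.
-/

lemma one_add_pow_of_sq_eq_zero {R : Type*} [Ring R] {N : R} (hN : N ^ 2 = 0) (n : ℕ) :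
    (1 + N) ^ n = 1 + n • N := by
  induction n with
  | zero => simp
  | succ n ih =>
    rw [pow_succ, ih, mul_add, mul_one, add_mul, one_mul, smul_mul_assoc, ← sq, hN, smul_zero,
      add_zero, succ_nsmul, add_assoc]

lemma eq_or_mul_eq_one_of_quadratic {R : Type*} [CommRing R] [IsDomain R] {t z w : R}
    (hz : z ^ 2 - t * z + 1 = 0) (hw : w ^ 2 - t * w + 1 = 0) : w = z ∨ w * z = 1 := by
  have : (w - z) * (w * z - 1) = 0 := by linear_combination z * hw - w * hz
  rcases mul_eq_zero.1 this with h | h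
  · exact Or.inl (sub_eq_zero.1 h)
  · exact Or.inr (sub_eq_zero.1 h)

section OrderOf

variable {G : Type*} [Monoid G] {x : G} {k : ℕ}

lemma IsOfFinOrder.natCast_eq_one_of_pow_eq_self (hx : IsOfFinOrder x) (h : x ^ k = x) :
    (k : ZMod (orderOf x)) = 1 := by
  rw [← Nat.cast_one, ZMod.natCast_eq_natCast_iff, ← hx.pow_eq_pow_iff_modEq, pow_one, h]

lemma natCast_eq_neg_one_of_pow_mul_self_eq_one (h : x ^ k * x = 1) :
    (k : ZMod (orderOf x)) = -1 := by
  have hdvd : orderOf x ∣ k + 1 := orderOf_dvd_of_pow_eq_one (by rwa [pow_succ])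
  have := (ZMod.natCast_eq_zero_iff _ _).2 hdvd
  push_cast at this
  linear_combination this

end OrderOf

namespace Matrix

lemma GeneralLinearGroup.trace_pow_eq_of_conj_eq_pow {n R : Type*} [Fintype n] [DecidableEq n]
    [CommRing R] {x a : GL n R} {k : ℕ} (h : x * a * x⁻¹ = a ^ k) :
    trace ((a : Matrix n n R) ^ k) = trace (a : Matrix n n R) := by
  rw [← Units.val_pow_eq_pow_val, ← h, Units.val_mul, Units.val_mul, trace_units_conj]

section Field

variable {K : Type*} [Field K]

lemma mem_spectrum_fin_two_iff {A : Matrix (Fin 2) (Fin 2) K} {z : K} :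
    z ∈ spectrum K A ↔ z ^ 2 - A.trace * z + A.det = 0 := by
  simp [mem_spectrum_iff_isRoot_charpoly, charpoly_fin_two]

open Polynomial in
lemma sub_one_sq_eq_zero_of_det_eq_one_of_trace_eq_two {A : Matrix (Fin 2) (Fin 2) K}
    (hdet : A.det = 1) (htr : A.trace = 2) : (A - 1) ^ 2 = 0 := by
  have cayley_hamilton := aeval_self_charpoly A
  simp only [charpoly_fin_two, hdet, htr, map_add, map_sub, map_pow, aeval_X, map_mul,
    map_ofNat, map_one] at cayley_hamilton
  rw [← cayley_hamilton]
  noncomm_ring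

variable [CharZero K]

lemma eq_one_of_pow_eq_one_of_trace_eq_two {A : Matrix (Fin 2) (Fin 2) K}
    (hdet : A.det = 1) (htr : A.trace = 2) {n : ℕ} (hn : n ≠ 0) (hA : A ^ n = 1) : A = 1 := by
  have h := one_add_pow_of_sq_eq_zero (sub_one_sq_eq_zero_of_det_eq_one_of_trace_eq_two hdet htr) n
  rw [add_sub_cancel, hA, left_eq_add, ← Nat.cast_smul_eq_nsmul K, smul_eq_zero, sub_eq_zero,
    Nat.cast_eq_zero] at h
  exact h.resolve_left hn

theorem natCast_eq_one_or_neg_one_of_trace_pow_eq [IsAlgClosed K] {ℓ : ℕ} (hℓ : ℓ.Prime)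
    {A : Matrix (Fin 2) (Fin 2) K} (hdet : A.det = 1) (hA : orderOf A = ℓ) {k : ℕ}
    (htr : (A ^ k).trace = A.trace) : (k : ZMod ℓ) = 1 ∨ (k : ZMod ℓ) = -1 := by
  obtain ⟨z, hz⟩ := spectrum.nonempty_of_isAlgClosed_of_finiteDimensional K A
  have hAℓ : A ^ ℓ = 1 := hA ▸ pow_orderOf_eq_one A
  have hzℓ : z ^ ℓ = 1 := by simpa [hAℓ, spectrum.one_eq] using spectrum.pow_mem_pow A ℓ hz
  have hzk : z ^ k ∈ spectrum K (A ^ k) := spectrum.pow_mem_pow A k hz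
  rw [mem_spectrum_fin_two_iff, hdet] at hz
  rw [mem_spectrum_fin_two_iff, det_pow, hdet, one_pow, htr] at hzk
  have hz1 : z ≠ 1 := by
    rintro rfl
    have htr2 : A.trace = 2 := by linear_combination -hz
    rw [eq_one_of_pow_eq_one_of_trace_eq_two hdet htr2 hℓ.ne_zero hAℓ, orderOf_one] at hA
    exact hℓ.ne_one hA.symm
  have hzord : orderOf z = ℓ := haveI := Fact.mk hℓ; orderOf_eq_prime hzℓ hz1
  rw [← hzord]
  rcases eq_or_mul_eq_one_of_quadratic hz hzk with h | h
  · exact Or.inl ((isOfFinOrder_iff_pow_eq_one.2 ⟨ℓ, hℓ.pos, hzℓ⟩).natCast_eq_one_of_pow_eq_self h)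
  · exact Or.inr (natCast_eq_neg_one_of_pow_mul_self_eq_one h)

end Field

end Matrix

theorem conj_pow_of_order_ell_general (D : Type*) [CommRing D] [IsDomain D] [CharZero D]
    (ℓ : ℕ) (hℓ : ℓ.Prime)
    (g : Matrix.SpecialLinearGroup (Fin 2) D) (hg : orderOf g = ℓ)
    (x : Matrix.GeneralLinearGroup (Fin 2) D) (k : ℕ)
    (hx : x * Matrix.SpecialLinearGroup.toGL g * x⁻¹ = Matrix.SpecialLinearGroup.toGL g ^ k) :
    (k : ZMod ℓ) = 1 ∨ (k : ZMod ℓ) = -1 := by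
  let K := AlgebraicClosure (FractionRing D)
  have hinj : Function.Injective (algebraMap D K) := by
    rw [IsScalarTower.algebraMap_eq D (FractionRing D) K]
    exact (algebraMap (FractionRing D) K).injective.comp (IsFractionRing.injective D _)
  let φ := (algebraMap D K).mapMatrix (m := Fin 2)
  have htr : ((g : Matrix (Fin 2) (Fin 2) D) ^ k).trace = (g : Matrix (Fin 2) (Fin 2) D).trace :=
    Matrix.GeneralLinearGroup.trace_pow_eq_of_conj_eq_pow hx
  refine Matrix.natCast_eq_one_or_neg_one_of_trace_pow_eq hℓ (A := φ g) ?_ ?_ ?_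
  · rw [← RingHom.map_det, g.det_coe, map_one]
  · rw [← hg, ← Matrix.SpecialLinearGroup.coeMonoidHom_apply]
    exact orderOf_injective (φ.toMonoidHom.comp Matrix.SpecialLinearGroup.coeMonoidHom)
      ((Matrix.map_injective hinj).comp Matrix.SpecialLinearGroup.coeMonoidHom_injective) g
  · rw [← map_pow]
    simp only [φ, RingHom.mapMatrix_apply, ← AddMonoidHom.map_trace, htr]

/-- Let `D` be an integral domain of characteristic `0`, `ℓ` an odd prime,
`g ∈ SL₂(D)` of order exactly `ℓ`, and `x ∈ GL₂(D)` with `x·g·x⁻¹ = g^k` for a natural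
number `k`.  Then `k ≡ 1 (mod ℓ)` or `k ≡ −1 (mod ℓ)`. -/
theorem conj_pow_of_order_ell (D : Type*) [CommRing D] [IsDomain D] [CharZero D]
    (ℓ : ℕ) (hℓ : ℓ.Prime) (hℓodd : Odd ℓ)
    (g : Matrix.SpecialLinearGroup (Fin 2) D) (hg : orderOf g = ℓ)
    (x : Matrix.GeneralLinearGroup (Fin 2) D) (k : ℕ)
    (hx : x * Matrix.SpecialLinearGroup.toGL g * x⁻¹ = Matrix.SpecialLinearGroup.toGL g ^ k) :
    (k : ZMod ℓ) = 1 ∨ (k : ZMod ℓ) = -1 :=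
  conj_pow_of_order_ell_general D ℓ hℓ g hg x k hx
end

section
/- Let K be a number field, S a finite set of finite places of K, O = O_{K,S}, and ℓ an odd prime which is invertible in O. Let a ∈ O be such that a = ζ + ζ⁻¹ for some primitive ℓ-th root of unity ζ in an algebraic closure of K, and assume K contains no primitive ℓ-th root of unity (so that R := O[T]/(T² − aT + 1) is an integral domain). Then for every g ∈ SL₂(O) of order exactly ℓ with tr(g) = a, the centralizer of g in SL₂(O) is isomorphic as a group to ker(Nm₁ : R^× → O^×), the group of units of R of norm 1. -/
/-!
Sending `T` to `g` defines an `O`-algebra map `R = O[T]/(T² − aT + 1) → M₂(O)` (Cayley–Hamilton),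
under which `det (α + βg) = α² + aαβ + β²` is the norm of `α + βT`. Since `tr g = a` and
`det g = 1`, the discriminant of `g` is `a² − 4`; when it is a unit, every matrix commuting with
`g` is `α + βg` for unique `α, β`, so `R` maps isomorphically onto the centralizer of `g` in
`M₂(O)`, and the units of norm one onto the centralizer of `g` in `SL₂(O)`. Finally
`a² − 4 = (ζ − ζ⁻¹)²` divides `ℓ²` among algebraic integers (as `1 − ζ²` divides
`ℓ = ∏ (1 − ζ^i)`), and `ℓ` is invertible in `O`, so `a² − 4` is a unit of `O`.
-/

open IsDedekindDomain NumberField Polynomial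

/-- The quadratic extension `R = O[T]/(T² − a·T + 1)` of a commutative ring `O`. -/
noncomputable abbrev QuadExt (O : Type*) [CommRing O] (a : O) : Type _ :=
  AdjoinRoot (X ^ 2 - C a * X + 1 : O[X])

namespace Matrix

variable {O : Type*} [CommRing O]

theorem det_smul_one_add_smul (g : Matrix (Fin 2) (Fin 2) O) (α β : O) :
    (α • 1 + β • g).det = α ^ 2 + α * β * g.trace + β ^ 2 * g.det := by
  simp only [det_fin_two, trace_fin_two, add_apply, smul_apply, one_apply_eq, one_apply_ne,
    ne_eq, zero_ne_one, one_ne_zero, not_false_eq_true, smul_eq_mul, mul_one, mul_zero, zero_add]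
  ring

theorem eq_zero_of_smul_one_add_smul_eq_zero {g : Matrix (Fin 2) (Fin 2) O}
    (hg : IsUnit g.discr) {α β : O} (h : α • 1 + β • g = 0) : α = 0 ∧ β = 0 := by
  have h00 : α + β * g 0 0 = 0 := by simpa using congrFun₂ h 0 0
  have h01 : β * g 0 1 = 0 := by simpa using congrFun₂ h 0 1
  have h11 : α + β * g 1 1 = 0 := by simpa using congrFun₂ h 1 1
  have hβ_discr : β * g.discr = 0 := by
    rw [discr_fin_two, trace_fin_two, det_fin_two]
    linear_combination (g 0 0 - g 1 1) * h00 - (g 0 0 - g 1 1) * h11 + 4 * g 1 0 * h01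
  have hβ : β = 0 := hg.mul_left_eq_zero.1 hβ_discr
  exact ⟨by simpa [hβ] using h00, hβ⟩

theorem exists_smul_one_add_smul_eq_of_commute {g m : Matrix (Fin 2) (Fin 2) O}
    (hg : IsUnit g.discr) (hm : Commute g m) : ∃ α β : O, α • 1 + β • g = m := by
  obtain ⟨d, hd⟩ := hg.exists_right_inv
  rw [discr_fin_two, trace_fin_two, det_fin_two] at hd
  have hgm (i j : Fin 2) := congrFun₂ hm.eq i j
  simp only [mul_apply, Fin.sum_univ_two] at hgm
  have c00 : g 0 1 * m 1 0 = m 0 1 * g 1 0 := by linear_combination hgm 0 0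
  have c01 : g 0 1 * (m 0 0 - m 1 1) = m 0 1 * (g 0 0 - g 1 1) := by linear_combination -hgm 0 1
  have c10 : g 1 0 * (m 0 0 - m 1 1) = m 1 0 * (g 0 0 - g 1 1) := by linear_combination hgm 1 0
  -- `(m 0 1, m 1 0, m 0 0 - m 1 1)` is proportional to `(g 0 1, g 1 0, g 0 0 - g 1 1)`, and
  -- `discr g = (g 0 0 - g 1 1) ^ 2 + 4 * g 0 1 * g 1 0` lets us solve for the factor `β`.
  set β := d * (4 * g 1 0 * m 0 1 + (g 0 0 - g 1 1) * (m 0 0 - m 1 1))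
  refine ⟨m 0 0 - β * g 0 0, β, ?_⟩
  ext i j
  fin_cases i <;> fin_cases j <;>
    simp only [Fin.zero_eta, Fin.mk_one, Fin.isValue, add_apply, smul_apply, one_apply_eq,
      one_apply_ne, ne_eq, zero_ne_one, one_ne_zero, not_false_eq_true, smul_eq_mul, mul_one,
      mul_zero, zero_add, sub_add_cancel, β]
  · linear_combination d * (g 0 0 - g 1 1) * c01 + m 0 1 * hd
  · linear_combination -4 * d * g 1 0 * c00 + d * (g 0 0 - g 1 1) * c10 + m 1 0 * hd
  · linear_combination -(m 0 0 - m 1 1) * hd + 4 * d * g 1 0 * c01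

theorem SpecialLinearGroup.discr_fin_two (g : SpecialLinearGroup (Fin 2) O) :
    (g : Matrix (Fin 2) (Fin 2) O).discr = (g : Matrix (Fin 2) (Fin 2) O).trace ^ 2 - 4 := by
  rw [Matrix.discr_fin_two, g.det_coe, mul_one]

theorem SpecialLinearGroup.mem_centralizer_singleton_iff {n : Type*} [Fintype n] [DecidableEq n]
    {g m : SpecialLinearGroup n O} :
    m ∈ Subgroup.centralizer {g} ↔
      (m : Matrix n n O) ∈ Subalgebra.centralizer O {(g : Matrix n n O)} := by
  simp only [Subgroup.mem_centralizer_singleton_iff, Subalgebra.mem_centralizer_iff,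
    Set.mem_singleton_iff, forall_eq, ← coe_mul, eq_comm]
  exact Subtype.coe_injective.eq_iff.symm

end Matrix

namespace QuadExt

variable {O : Type*} [CommRing O] (a : O)

noncomputable def root : QuadExt O a := AdjoinRoot.root _

theorem root_mul_root : root a * root a = a • root a - 1 := by
  have h := AdjoinRoot.mk_self (f := (X ^ 2 - C a * X + 1 : O[X]))
  simp only [map_add, map_sub, map_mul, map_pow, map_one, AdjoinRoot.mk_X, AdjoinRoot.mk_C] at h
  rw [root, Algebra.smul_def, AdjoinRoot.algebraMap_eq]
  linear_combination h

theorem monic_polynomial : (X ^ 2 - C a * X + 1 : O[X]).Monic := by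
  monicity!

variable [Nontrivial O]

theorem natDegree_polynomial : (X ^ 2 - C a * X + 1 : O[X]).natDegree = 2 := by
  compute_degree!

noncomputable def basis : Module.Basis (Fin 2) O (QuadExt O a) :=
  (AdjoinRoot.powerBasis' (monic_polynomial a)).basis.reindex (finCongr (natDegree_polynomial a))

theorem basis_apply (i : Fin 2) : basis a i = root a ^ (i : ℕ) := by
  rw [basis, Module.Basis.reindex_apply, PowerBasis.basis_eq_pow]
  rfl

@[simp] theorem basis_zero : basis a 0 = 1 := by simpa using basis_apply a 0

@[simp] theorem basis_one : basis a 1 = root a := by simpa using basis_apply a 1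

theorem exists_smul_one_add_smul_eq (x : QuadExt O a) : ∃ α β : O, α • 1 + β • root a = x :=
  ⟨(basis a).repr x 0, (basis a).repr x 1, by
    simpa only [Fin.sum_univ_two, basis_zero, basis_one] using (basis a).sum_repr x⟩

theorem leftMulMatrix_root : Algebra.leftMulMatrix (basis a) (root a) = !![0, -1; 1, a] := by
  have h1 : (basis a).repr (root a) = Finsupp.single 1 1 := by
    rw [← basis_one, Module.Basis.repr_self]
  have h2 : (basis a).repr (root a * root a) = Finsupp.single 0 (-1) + Finsupp.single 1 a := by
    have h : root a * root a = (-1 : O) • basis a 0 + a • basis a 1 := by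
      rw [root_mul_root, basis_zero, basis_one]
      module
    rw [h, map_add, map_smul, map_smul, Module.Basis.repr_self, Module.Basis.repr_self,
      Finsupp.smul_single_one, Finsupp.smul_single_one]
  ext i j
  fin_cases i <;> fin_cases j <;> simp [Algebra.leftMulMatrix_eq_repr_mul, h1, h2]

theorem norm_smul_one_add_smul (α β : O) :
    Algebra.norm O (α • 1 + β • root a) = α ^ 2 + α * β * a + β ^ 2 := by
  rw [Algebra.norm_eq_matrix_det (basis a), map_add, map_smul, map_smul, map_one,
    leftMulMatrix_root, Matrix.det_smul_one_add_smul]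
  simp [Matrix.trace_fin_two]

variable {a}

noncomputable def toMatrix (g : Matrix.SpecialLinearGroup (Fin 2) O)
    (htr : (g : Matrix (Fin 2) (Fin 2) O).trace = a) :
    QuadExt O a →ₐ[O] Matrix (Fin 2) (Fin 2) O :=
  Ideal.Quotient.liftₐ _ (aeval (g : Matrix (Fin 2) (Fin 2) O)) fun p hp => by
    have hchar : (g : Matrix (Fin 2) (Fin 2) O).charpoly = X ^ 2 - C a * X + 1 := by
      rw [Matrix.charpoly_fin_two, htr, g.det_coe, C_1]
    obtain ⟨q, rfl⟩ := Ideal.mem_span_singleton'.1 hp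
    rw [map_mul, ← hchar, Matrix.aeval_self_charpoly, mul_zero]

variable (g : Matrix.SpecialLinearGroup (Fin 2) O) (htr : (g : Matrix (Fin 2) (Fin 2) O).trace = a)

theorem toMatrix_root : toMatrix g htr (root a) = g :=
  aeval_X _

theorem toMatrix_smul_one_add_smul (α β : O) :
    toMatrix g htr (α • 1 + β • root a) = α • 1 + β • (g : Matrix (Fin 2) (Fin 2) O) := by
  rw [map_add, map_smul, map_smul, map_one, toMatrix_root]

theorem det_toMatrix (x : QuadExt O a) : (toMatrix g htr x).det = Algebra.norm O x := by
  obtain ⟨α, β, rfl⟩ := exists_smul_one_add_smul_eq a x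
  rw [toMatrix_smul_one_add_smul, Matrix.det_smul_one_add_smul, norm_smul_one_add_smul, htr,
    g.det_coe]
  ring

variable {g htr}

theorem toMatrix_injective (hdisc : IsUnit (a ^ 2 - 4)) : Function.Injective (toMatrix g htr) := by
  refine (injective_iff_map_eq_zero _).2 fun x hx => ?_
  obtain ⟨α, β, rfl⟩ := exists_smul_one_add_smul_eq a x
  rw [toMatrix_smul_one_add_smul] at hx
  have hg : IsUnit (g : Matrix (Fin 2) (Fin 2) O).discr := by
    rwa [Matrix.SpecialLinearGroup.discr_fin_two, htr]
  obtain ⟨rfl, rfl⟩ := Matrix.eq_zero_of_smul_one_add_smul_eq_zero hg hx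
  simp

theorem range_toMatrix (hdisc : IsUnit (a ^ 2 - 4)) :
    (toMatrix g htr).range = Subalgebra.centralizer O {(g : Matrix (Fin 2) (Fin 2) O)} := by
  ext m
  simp only [AlgHom.mem_range, Subalgebra.mem_centralizer_iff, Set.mem_singleton_iff, forall_eq]
  constructor
  · rintro ⟨x, rfl⟩
    rw [← toMatrix_root g htr]
    exact ((Commute.all _ x).map (toMatrix g htr)).eq
  · intro hm
    have hg : IsUnit (g : Matrix (Fin 2) (Fin 2) O).discr := by
      rwa [Matrix.SpecialLinearGroup.discr_fin_two, htr]
    obtain ⟨α, β, rfl⟩ := Matrix.exists_smul_one_add_smul_eq_of_commute hg hm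
    exact ⟨α • 1 + β • root a, toMatrix_smul_one_add_smul g htr α β⟩

variable (g htr) in
noncomputable def normOneToSL :
    (Units.map (Algebra.norm O : QuadExt O a →* O)).ker →* Matrix.SpecialLinearGroup (Fin 2) O where
  toFun u := ⟨toMatrix g htr (u : (QuadExt O a)ˣ), by
    rw [det_toMatrix]
    exact congrArg Units.val u.2⟩
  map_one' := Subtype.ext (map_one (toMatrix g htr))
  map_mul' _ _ := Subtype.ext (map_mul (toMatrix g htr) _ _)

theorem normOneToSL_injective (hdisc : IsUnit (a ^ 2 - 4)) :
    Function.Injective (normOneToSL g htr) := fun _ _ h =>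
  Subtype.ext <| Units.ext <| toMatrix_injective hdisc (congrArg Subtype.val h)

theorem range_normOneToSL (hdisc : IsUnit (a ^ 2 - 4)) :
    (normOneToSL g htr).range = Subgroup.centralizer {g} := by
  have hmem (m : Matrix.SpecialLinearGroup (Fin 2) O) :
      m ∈ Subgroup.centralizer {g} ↔ ∃ x, toMatrix g htr x = m := by
    rw [Matrix.SpecialLinearGroup.mem_centralizer_singleton_iff, ← range_toMatrix hdisc,
      AlgHom.mem_range]
  ext m
  rw [hmem]
  constructor
  · rintro ⟨u, rfl⟩
    exact ⟨_, rfl⟩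
  · rintro ⟨x, hx⟩
    obtain ⟨y, hy⟩ := (hmem m⁻¹).1 (inv_mem ((hmem m).2 ⟨x, hx⟩))
    have hxy : x * y = 1 := toMatrix_injective hdisc <| by
      rw [map_mul, hx, hy, map_one, ← Matrix.SpecialLinearGroup.coe_mul, mul_inv_cancel,
        Matrix.SpecialLinearGroup.coe_one]
    have hnorm : Algebra.norm O x = 1 := by rw [← det_toMatrix g htr, hx, m.det_coe]
    exact ⟨⟨⟨x, y, hxy, mul_comm y x ▸ hxy⟩, Units.ext hnorm⟩, Subtype.ext hx⟩

end QuadExt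

theorem IsPrimitiveRoot.exists_isIntegral_one_sub_mul_eq {L : Type*} [CommRing L] [IsDomain L]
    {p : ℕ} [hp : Fact p.Prime] {μ : L} (hμ : IsPrimitiveRoot μ p) :
    ∃ c : L, IsIntegral ℤ c ∧ (1 - μ) * c = p := by
  classical
  have hμ_mem : μ ∈ primitiveRoots p L := (mem_primitiveRoots hp.out.pos).2 hμ
  refine ⟨∏ ν ∈ (primitiveRoots p L).erase μ, (1 - ν), ?_, ?_⟩
  · refine IsIntegral.prod _ fun ν hν => isIntegral_one.sub ?_
    exact ((mem_primitiveRoots hp.out.pos).1 (Finset.mem_of_mem_erase hν)).isIntegral hp.out.pos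
  · rw [Finset.mul_prod_erase _ (fun ν => 1 - ν) hμ_mem, ← eval_one_cyclotomic_prime,
      cyclotomic_eq_prod_X_sub_primitiveRoots hμ, eval_prod]
    simp

theorem IsPrimitiveRoot.exists_isIntegral_add_inv_sq_sub_four_mul_eq {L : Type*} [Field L]
    {p : ℕ} [hp : Fact p.Prime] (hp_odd : Odd p) {ζ : L} (hζ : IsPrimitiveRoot ζ p) :
    ∃ c : L, IsIntegral ℤ c ∧ ((ζ + ζ⁻¹) ^ 2 - 4) * c = p ^ 2 := by
  have hζ2 : IsPrimitiveRoot (ζ ^ 2) p :=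
    hζ.pow_of_coprime 2 (Nat.coprime_comm.1 hp_odd.coprime_two_right)
  obtain ⟨c, hc, hc_mul⟩ := hζ2.exists_isIntegral_one_sub_mul_eq
  -- `(ζ + ζ⁻¹) ^ 2 - 4 = ζ⁻² * (1 - ζ ^ 2) ^ 2`
  refine ⟨ζ ^ 2 * c ^ 2, ((hζ.isIntegral hp.out.pos).pow 2).mul (hc.pow 2), ?_⟩
  have hζ0 : ζ ≠ 0 := hζ.ne_zero hp.out.ne_zero
  rw [← hc_mul]
  field_simp
  ring

theorem isUnit_of_dvd_unit_of_isIntegral {K L : Type*} [Field K] [NumberField K] [Field L]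
    [Algebra K L] {S : Set (HeightOneSpectrum (𝓞 K))} {x n : S.integer K} (hn : IsUnit n)
    {c : L} (hc : IsIntegral ℤ c) (h : algebraMap K L x * c = algebraMap K L n) : IsUnit x := by
  have hx : (x : K) ≠ 0 := by
    intro hx
    rw [hx, map_zero, zero_mul, eq_comm, map_eq_zero, ZeroMemClass.coe_eq_zero] at h
    exact hn.ne_zero h
  set y : K := n / x
  have hy : IsIntegral ℤ y := by
    rwa [← isIntegral_algebraMap_iff (algebraMap K L).injective, map_div₀, ← h,
      mul_div_cancel_left₀ _ (by simpa using hx)]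
  have hxy : x * ⟨y, (S.integer K).algebraMap_mem (⟨y, hy⟩ : 𝓞 K)⟩ = n :=
    Subtype.ext (mul_div_cancel₀ _ hx)
  exact isUnit_of_mul_isUnit_left (hxy ▸ hn)

theorem isUnit_sq_sub_four {K : Type*} [Field K] [NumberField K]
    {S : Set (HeightOneSpectrum (𝓞 K))} {ℓ : ℕ} [Fact ℓ.Prime] (hℓodd : Odd ℓ)
    (hℓinv : IsUnit (ℓ : S.integer K)) {a : S.integer K}
    (ha : ∃ ζ : AlgebraicClosure K, IsPrimitiveRoot ζ ℓ ∧
      algebraMap K (AlgebraicClosure K) (a : K) = ζ + ζ⁻¹) :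
    IsUnit (a ^ 2 - 4) := by
  obtain ⟨ζ, hζ, haζ⟩ := ha
  obtain ⟨c, hc, hc_mul⟩ := hζ.exists_isIntegral_add_inv_sq_sub_four_mul_eq hℓodd
  refine isUnit_of_dvd_unit_of_isIntegral (hℓinv.pow 2) hc ?_
  rw [← haζ] at hc_mul
  have h4 : ((4 : S.integer K) : K) = 4 := rfl
  simpa [h4, map_ofNat] using hc_mul

theorem centralizer_iso_ker_norm_general (K : Type*) [Field K] [NumberField K]
    (S : Set (HeightOneSpectrum (𝓞 K)))
    (ℓ : ℕ) (hℓ : ℓ.Prime) (hℓodd : Odd ℓ) (hℓinv : IsUnit (ℓ : S.integer K))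
    (a : S.integer K)
    (ha : ∃ ζ : AlgebraicClosure K, IsPrimitiveRoot ζ ℓ ∧
      algebraMap K (AlgebraicClosure K) (a : K) = ζ + ζ⁻¹)
    (g : Matrix.SpecialLinearGroup (Fin 2) (S.integer K))
    (htr : Matrix.trace (g : Matrix (Fin 2) (Fin 2) (S.integer K)) = a) :
    Nonempty (Subgroup.centralizer {g} ≃*
      (Units.map (Algebra.norm (S.integer K) :
        QuadExt (S.integer K) a →* S.integer K)).ker) := by
  have := Fact.mk hℓ
  have hdisc := isUnit_sq_sub_four hℓodd hℓinv ha
  exact ⟨((MonoidHom.ofInjective (QuadExt.normOneToSL_injective (htr := htr) hdisc)).trans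
    (MulEquiv.subgroupCongr (QuadExt.range_normOneToSL hdisc))).symm⟩

/-- Let `K` be a number field, `S` a finite set of finite places,
`O = O_{K,S}`, and `ℓ` an odd prime invertible in `O`.  Let `a ∈ O` with `a = ζ + ζ⁻¹` for a
primitive `ℓ`-th root of unity `ζ` in an algebraic closure of `K`, and assume `K` contains no
primitive `ℓ`-th root of unity (so `R = O[T]/(T² − aT + 1)` is a domain).  Then for every
`g ∈ SL₂(O)` of order exactly `ℓ` with `tr(g) = a`, the centralizer of `g` in `SL₂(O)` is
isomorphic as a group to `ker(Nm₁ : Rˣ → Oˣ)`, the units of `R` of norm `1`. -/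
theorem centralizer_iso_ker_norm (K : Type*) [Field K] [NumberField K]
    (S : Set (HeightOneSpectrum (𝓞 K))) (hS : S.Finite)
    (ℓ : ℕ) (hℓ : ℓ.Prime) (hℓodd : Odd ℓ) (hℓinv : IsUnit (ℓ : S.integer K))
    (a : S.integer K)
    (ha : ∃ ζ : AlgebraicClosure K, IsPrimitiveRoot ζ ℓ ∧
      algebraMap K (AlgebraicClosure K) (a : K) = ζ + ζ⁻¹)
    (hKnoζ : ¬∃ ζ : K, IsPrimitiveRoot ζ ℓ)
    (g : Matrix.SpecialLinearGroup (Fin 2) (S.integer K))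
    (hg : orderOf g = ℓ)
    (htr : Matrix.trace (g : Matrix (Fin 2) (Fin 2) (S.integer K)) = a) :
    Nonempty (Subgroup.centralizer {g} ≃*
      (Units.map (Algebra.norm (S.integer K) :
        QuadExt (S.integer K) a →* S.integer K)).ker) :=
  centralizer_iso_ker_norm_general K S ℓ hℓ hℓodd hℓinv a ha g htr
end
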